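/- Let K be a valued field with valuation ring O, and let H, H' be finite-dimensional K-vector spaces. If u is a semi-lattice in H and u' is a semi-lattice in H', then the O-module u ⊗_O u' (viewed as an O-submodule of H ⊗_K H') is a semi-lattice in H ⊗_K H'. -/
import Mathlib


open TensorProduct

section

variable (K : Type*) {O : Type*} [Field K] [CommRing O] [IsDomain O] [ValuationRing O]
  [Algebra O K] [IsFractionRing O K]

/-- An `O`-submodule `u` of the `K`-vector space `M` is a *semi-lattice* if there is a
`K`-subspace `U ≤ M` contained in `u` such that `u/U` is a lattice in `M/U`, i.e. `u`
is generated over `U` by finitely many elements as an `O`-module, and `u` spans `M`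
over `K`. -/
def IsSemiLattice {M : Type*} [AddCommGroup M] [Module K M] [Module O M]
    [IsScalarTower O K M] (u : Submodule O M) : Prop :=
  ∃ U : Submodule K M, U.restrictScalars O ≤ u ∧
    (∃ s : Finset M, u = U.restrictScalars O ⊔ Submodule.span O (s : Set M)) ∧
    Submodule.span K (u : Set M) = ⊤

/-- If a set is stable under `K`-scaling, its `O`-span is too. -/
lemma aux_stable {M : Type*} [AddCommGroup M] [Module K M] [Module O M]
    [IsScalarTower O K M] {S : Set M} (h : ∀ (c : K), ∀ z ∈ S, c • z ∈ S)
    (c : K) {z : M} (hz : z ∈ Submodule.span O S) : c • z ∈ Submodule.span O S := by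
  induction hz using Submodule.span_induction with
  | mem x hx => exact Submodule.subset_span (h c x hx)
  | zero => simp
  | add x y _ _ hx hy => rw [smul_add]; exact add_mem hx hy
  | smul a x _ hx => rw [smul_comm]; exact Submodule.smul_mem _ a hx

/-- If `u` is a semi-lattice in `H` and `u'` is a semi-lattice in `H'`, then the
`O`-submodule `u ⊗_O u'` of `H ⊗_K H'` (the `O`-submodule generated by the simple
tensors `x ⊗ y` with `x ∈ u`, `y ∈ u'`) is a semi-lattice in `H ⊗_K H'`. -/
theorem stmt10 {H H' : Type*}
    [AddCommGroup H] [Module K H] [Module O H] [IsScalarTower O K H]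
    [AddCommGroup H'] [Module K H'] [Module O H'] [IsScalarTower O K H']
    [FiniteDimensional K H] [FiniteDimensional K H']
    (u : Submodule O H) (u' : Submodule O H')
    (hu : IsSemiLattice K u) (hu' : IsSemiLattice K u') :
    IsSemiLattice K (Submodule.span O
      {z : H ⊗[K] H' | ∃ x ∈ u, ∃ y ∈ u', z = x ⊗ₜ[K] y}) := by
  classical
  obtain ⟨U, hUu, ⟨s, hs⟩, hspanu⟩ := hu
  obtain ⟨U', hU'u', ⟨s', hs'⟩, hspanu'⟩ := hu'
  set T : Set (H ⊗[K] H') := {z : H ⊗[K] H' | ∃ x ∈ u, ∃ y ∈ u', z = x ⊗ₜ[K] y} with hT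
  set S : Set (H ⊗[K] H') :=
    {z | ∃ x ∈ U, ∃ y : H', z = x ⊗ₜ[K] y} ∪ {z | ∃ x : H, ∃ y ∈ U', z = x ⊗ₜ[K] y}
    with hSdef
  have hSstab : ∀ (c : K), ∀ z ∈ S, c • z ∈ S := by
    rintro c z (⟨x, hx, y, rfl⟩ | ⟨x, y, hy, rfl⟩)
    · exact Or.inl ⟨c • x, U.smul_mem c hx, y, (smul_tmul' c x y).symm⟩
    · exact Or.inr ⟨x, c • y, U'.smul_mem c hy, (tmul_smul c x y).symm⟩
  -- the `K`-subspace `W`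
  set W : Submodule K (H ⊗[K] H') :=
    { carrier := Submodule.span O S
      add_mem' := fun ha hb => add_mem ha hb
      zero_mem' := zero_mem _
      smul_mem' := fun c z hz => aux_stable K hSstab c hz } with hW
  have hWrs : W.restrictScalars O = Submodule.span O S := rfl
  -- every element of `S` lies in `span O T`
  have hS_le_T : S ⊆ (Submodule.span O T : Set (H ⊗[K] H')) := by
    rintro z (⟨x, hx, y, rfl⟩ | ⟨x, y, hy, rfl⟩)
    · -- x ∈ U, y arbitrary
      let p : Submodule K H' :=
        { carrier := {y : H' | ∀ x ∈ U, x ⊗ₜ[K] y ∈ Submodule.span O T}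
          add_mem' := by
            intro a b ha hb x hx
            rw [tmul_add]
            exact add_mem (ha x hx) (hb x hx)
          zero_mem' := by intro x hx; simp
          smul_mem' := by
            intro c y hy x hx
            rw [tmul_smul, smul_tmul']
            exact hy (c • x) (U.smul_mem c hx) }
      have hu'p : (u' : Set H') ⊆ p := by
        intro y hy x hxU
        exact Submodule.subset_span ⟨x, hUu hxU, y, hy, rfl⟩
      have : (⊤ : Submodule K H') ≤ p := by
        rw [← hspanu']; exact Submodule.span_le.2 hu'p
      exact this (Submodule.mem_top) x hx
    · let q : Submodule K H :=
        { carrier := {x : H | ∀ y ∈ U', x ⊗ₜ[K] y ∈ Submodule.span O T}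
          add_mem' := by
            intro a b ha hb y hy
            rw [add_tmul]
            exact add_mem (ha y hy) (hb y hy)
          zero_mem' := by intro y hy; simp
          smul_mem' := by
            intro c x hxq y hy
            rw [smul_tmul]
            exact hxq (c • y) (U'.smul_mem c hy) }
      have huq : (u : Set H) ⊆ q := by
        intro x hx y hyU
        exact Submodule.subset_span ⟨x, hx, y, hU'u' hyU, rfl⟩
      have : (⊤ : Submodule K H) ≤ q := by
        rw [← hspanu]; exact Submodule.span_le.2 huq
      exact this (Submodule.mem_top) y hy
  -- the finite set of simple tensors
  set E : Finset (H ⊗[K] H') := (s ×ˢ s').image (fun p : H × H' => p.1 ⊗ₜ[K] p.2) with hE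
  have htensor : ∀ b ∈ Submodule.span O (s : Set H), ∀ b' ∈ Submodule.span O (s' : Set H'),
      b ⊗ₜ[K] b' ∈ Submodule.span O (E : Set (H ⊗[K] H')) := by
    intro b hb
    induction hb using Submodule.span_induction with
    | mem m hm =>
      intro b' hb'
      induction hb' using Submodule.span_induction with
      | mem n hn =>
        exact Submodule.subset_span (by
          simp only [hE, Finset.coe_image, Set.mem_image]
          exact ⟨(m, n), by simpa using ⟨hm, hn⟩, rfl⟩)
      | zero => simp
      | add a b _ _ ha hb => rw [tmul_add]; exact add_mem ha hb
      | smul c a _ ha => rw [tmul_smul]; exact Submodule.smul_mem _ c ha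
    | zero => intro b' _; simp
    | add a b _ _ ha hb => intro b' hb'; rw [add_tmul]; exact add_mem (ha b' hb') (hb b' hb')
    | smul c a _ ha => intro b' hb'; rw [← smul_tmul']; exact Submodule.smul_mem _ c (ha b' hb')
  refine ⟨W, ?_, ⟨E, ?_⟩, ?_⟩
  · -- W ≤ span O T
    rw [hWrs]
    exact Submodule.span_le.2 hS_le_T
  · -- span O T = W ⊔ span O E
    apply le_antisymm
    · refine Submodule.span_le.2 ?_
      rintro z ⟨x, hx, y, hy, rfl⟩
      rw [hs] at hx
      rw [hs'] at hy
      obtain ⟨a, ha, b, hb, rfl⟩ := Submodule.mem_sup.1 hx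
      obtain ⟨a', ha', b', hb', rfl⟩ := Submodule.mem_sup.1 hy
      have h1 : a ⊗ₜ[K] (a' + b') ∈ W.restrictScalars O := by
        rw [hWrs]
        exact Submodule.subset_span (Or.inl ⟨a, ha, a' + b', rfl⟩)
      have h2 : b ⊗ₜ[K] a' ∈ W.restrictScalars O := by
        rw [hWrs]
        exact Submodule.subset_span (Or.inr ⟨b, a', ha', rfl⟩)
      have h3 : b ⊗ₜ[K] b' ∈ Submodule.span O (E : Set (H ⊗[K] H')) := htensor b hb b' hb'
      have : (a + b) ⊗ₜ[K] (a' + b')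
          = a ⊗ₜ[K] (a' + b') + b ⊗ₜ[K] a' + b ⊗ₜ[K] b' := by
        rw [add_tmul, tmul_add b a' b', add_assoc]
      rw [this]
      exact add_mem (add_mem (Submodule.mem_sup_left h1) (Submodule.mem_sup_left h2))
        (Submodule.mem_sup_right h3)
    · refine sup_le ?_ ?_
      · rw [hWrs]; exact Submodule.span_le.2 hS_le_T
      · refine Submodule.span_le.2 ?_
        intro z hz
        simp only [hE, Finset.coe_image, Set.mem_image] at hz
        obtain ⟨⟨m, n⟩, hmn, rfl⟩ := hz
        simp only [Finset.mem_coe, Finset.mem_product] at hmn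
        have hm : m ∈ u := by
          rw [hs]; exact Submodule.mem_sup_right (Submodule.subset_span hmn.1)
        have hn : n ∈ u' := by
          rw [hs']; exact Submodule.mem_sup_right (Submodule.subset_span hmn.2)
        exact Submodule.subset_span ⟨m, hm, n, hn, rfl⟩
  · -- spans over K
    have hTspan : Submodule.span K T = ⊤ := by
      rw [eq_top_iff, ← span_tmul_eq_top K H H']
      refine Submodule.span_le.2 ?_
      rintro z ⟨h, h', rfl⟩
      let q : Submodule K H :=
        { carrier := {x : H | ∀ y : H', x ⊗ₜ[K] y ∈ Submodule.span K T}
          add_mem' := by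
            intro a b ha hb y; rw [add_tmul]; exact add_mem (ha y) (hb y)
          zero_mem' := by intro y; simp
          smul_mem' := by
            intro c x hxq y
            rw [← smul_tmul']
            exact Submodule.smul_mem _ c (hxq y)
        }
      have huq : (u : Set H) ⊆ q := by
        intro x hx y
        let p : Submodule K H' :=
          { carrier := {y : H' | x ⊗ₜ[K] y ∈ Submodule.span K T}
            add_mem' := by
              intro a b ha hb
              simp only [Set.mem_setOf_eq] at ha hb ⊢
              rw [tmul_add]; exact add_mem ha hb
            zero_mem' := by simp
            smul_mem' := by
              intro c y hy
              simp only [Set.mem_setOf_eq] at hy ⊢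
              rw [tmul_smul]
              exact Submodule.smul_mem _ c hy }
        have hu'p : (u' : Set H') ⊆ p := fun y hy =>
          Submodule.subset_span ⟨x, hx, y, hy, rfl⟩
        have : (⊤ : Submodule K H') ≤ p := by
          rw [← hspanu']; exact Submodule.span_le.2 hu'p
        exact this Submodule.mem_top
      have : (⊤ : Submodule K H) ≤ q := by
        rw [← hspanu]; exact Submodule.span_le.2 huq
      exact this Submodule.mem_top h'
    rw [eq_top_iff, ← hTspan]
    exact Submodule.span_mono Submodule.subset_span

end
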